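/- Let α ∈ [0,1] with α ≠ 1/2, let n ≥ 2 be even, and let a_0, …, a_n be independent real-valued random variables with P(a_i > 0) = α and P(a_i < 0) = 1 − α for every i. If k is even, 0 ≤ k ≤ n, and k = 2k′, then the probability p_{k,n} of exactly k sign changes equals Σ_{m=n/2}^{n} ((n−k+1)/(2m−n+1))·M(m; k′, n−k′−m, 2m−n)·(−1)^{n−k′−m}·(α(1−α))^{n−m}, where M(m; i,j,l) = m!/(i!·j!·l!) is the multinomial coefficient for i+j+l = m, taken to be 0 whenever any of i, j, l is negative. -/

import Mathlib

open MeasureTheory ProbabilityTheory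

/-- Number of sign changes of the sequence `a 0, a 1, …, a N` (there are `N`
consecutive pairs): the number of indices `0 ≤ i ≤ N - 1` with `a i * a (i+1) < 0`. -/
noncomputable def signChanges {Ω : Type*} (a : ℕ → Ω → ℝ) (N : ℕ) (ω : Ω) : ℕ :=
  ((Finset.range N).filter fun i => a i ω * a (i + 1) ω < 0).card

/-- `M(m; i, j, l)`: the multinomial coefficient `m!/(i!·j!·l!)` when
`i, j, l ≥ 0` and `i + j + l = m`, and `0` whenever any of `i, j, l` is negative. -/
noncomputable def trinom (m : ℕ) (i j l : ℤ) : ℝ :=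
  if 0 ≤ i ∧ 0 ≤ j ∧ 0 ≤ l ∧ i + j + l = m then
    (m.factorial : ℝ) /
      ((i.toNat.factorial : ℝ) * (j.toNat.factorial : ℝ) * (l.toNat.factorial : ℝ))
  else 0

/-!
Away from a null set the sign changes are those of the sign pattern `s ∈ {+,-}^{n+1}`, which by
independence has probability `∏ α^{[s_i = +]} (1-α)^{[s_i = -]}`. Let
`P_n(X) = ∑_s P(s) X^{#changes of s}`. Splitting off the first sign gives a two-state transfer
recursion whose matrix has trace `1` and determinant `α(1-α)(1 - X²)`, so by Cayley–Hamilton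
`P_{n+2} = P_{n+1} + z P_n` with `z = α(1-α)(X² - 1)`. Hence
`P_n = J_{n+1}(z) + 2α(1-α)(X-1) J_n(z)` for the Jacobsthal polynomials
`J_{n+2} = J_{n+1} + z J_n`, `J_{n+1}(z) = ∑_j C(n-j, j) z^j`. As `z` is a polynomial in `X²`,
the coefficient of `X^{2k'}` is a difference of two binomial double sums, and for even `n`
(so that `2m - n + 1 ≠ 0`) they merge termwise into the stated formula via
`(n-2k'+1)/(2m-n+1) · M(m; k', n-k'-m, 2m-n) = C(m,n-m) C(n-m,k') + 2 C(m,n-1-m) C(n-1-m,k')`.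
-/

open Polynomial Finset

section Jacobsthal

variable {R : Type*} [CommSemiring R]

def jacobsthal (z : R) : ℕ → R
  | 0 => 0
  | 1 => 1
  | n + 2 => jacobsthal z (n + 1) + z * jacobsthal z n

@[simp] lemma jacobsthal_zero (z : R) : jacobsthal z 0 = 0 := rfl

@[simp] lemma jacobsthal_one (z : R) : jacobsthal z 1 = 1 := rfl

lemma jacobsthal_add_two (z : R) (n : ℕ) :
    jacobsthal z (n + 2) = jacobsthal z (n + 1) + z * jacobsthal z n := rfl

lemma map_jacobsthal {S F : Type*} [CommSemiring S] [FunLike F R S] [RingHomClass F R S]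
    (f : F) (z : R) (n : ℕ) : f (jacobsthal z n) = jacobsthal (f z) n := by
  induction n using Nat.twoStepInduction with
  | zero => simp
  | one => simp
  | more n h₀ h₁ => simp [jacobsthal_add_two, h₀, h₁]

lemma jacobsthal_succ_eq_sum_antidiagonal (z : R) (n : ℕ) :
    jacobsthal z (n + 1) = ∑ p ∈ antidiagonal n, (p.1.choose p.2 : R) * z ^ p.2 := by
  induction n using Nat.twoStepInduction with
  | zero => simp
  | one => simp [jacobsthal_add_two, Nat.antidiagonal_succ]
  | more n h₀ h₁ =>
    rw [jacobsthal_add_two, h₀, h₁, Nat.antidiagonal_succ_succ', Nat.antidiagonal_succ']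
    simp only [sum_cons, sum_map, mul_sum, Nat.choose_zero_right, Nat.cast_one, pow_zero, mul_one,
      Function.Embedding.coe_prodMap, Function.Embedding.coeFn_mk, Prod.map_fst,
      Function.Embedding.refl_apply, Prod.map_snd, Nat.succ_eq_add_one, Nat.choose_zero_succ,
      Nat.cast_zero, zero_mul, zero_add]
    rw [add_assoc, ← sum_add_distrib]
    congr 1
    refine sum_congr rfl fun p _ ↦ ?_
    rw [Nat.choose_succ_succ']
    push_cast
    ring

lemma jacobsthal_eq_sum_range (z : R) (n : ℕ) :
    jacobsthal z n = ∑ m ∈ range n, (m.choose (n - 1 - m) : R) * z ^ (n - 1 - m) := by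
  cases n with
  | zero => simp
  | succ n =>
    rw [jacobsthal_succ_eq_sum_antidiagonal, Nat.sum_antidiagonal_eq_sum_range_succ_mk]
    simp

end Jacobsthal

lemma sum_pi_fin_succ {β M : Type*} [Fintype β] [AddCommMonoid M] {N : ℕ}
    (f : (Fin (N + 1) → β) → M) :
    ∑ s, f s = ∑ c, ∑ s : Fin N → β, f (Fin.cons c s) := by
  rw [← (Fin.consEquiv fun _ ↦ β).sum_comp, Fintype.sum_prod_type]
  rfl

noncomputable section SignPattern

variable {R : Type*} [CommRing R] (α : R)

def numChanges {N : ℕ} (s : Fin (N + 1) → Bool) : ℕ :=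
  #{i : Fin N | s i.castSucc ≠ s i.succ}

def signWeight (b : Bool) : R := if b then α else 1 - α

def patternWeight {N : ℕ} (s : Fin (N + 1) → Bool) : R := ∏ i, signWeight α (s i)

def changePoly (N : ℕ) : R[X] :=
  ∑ s : Fin (N + 1) → Bool, C (patternWeight α s) * X ^ numChanges s

/-- The part of `changePoly α N` coming from the patterns that start with the sign `b`. -/
def startPoly (N : ℕ) (b : Bool) : R[X] :=
  ∑ s : Fin N → Bool, C (patternWeight α (Fin.cons b s)) * X ^ numChanges (Fin.cons b s)

lemma numChanges_cons {N : ℕ} (b : Bool) (s : Fin (N + 1) → Bool) :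
    numChanges (Fin.cons b s : Fin (N + 2) → Bool) =
      (if b = s 0 then 0 else 1) + numChanges s := by
  simp only [numChanges, card_filter, Fin.sum_univ_succ, Fin.castSucc_zero, Fin.cons_zero,
    ← Fin.succ_castSucc, Fin.cons_succ, ne_eq, ite_not]

lemma patternWeight_cons {N : ℕ} (b : Bool) (s : Fin (N + 1) → Bool) :
    patternWeight α (Fin.cons b s : Fin (N + 2) → Bool) =
      signWeight α b * patternWeight α s := by
  simp [patternWeight, Fin.prod_univ_succ]

lemma changePoly_eq_startPoly (N : ℕ) :
    changePoly α N = startPoly α N true + startPoly α N false := by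
  rw [changePoly, sum_pi_fin_succ, Fintype.sum_bool]
  rfl

lemma startPoly_zero (b : Bool) : startPoly α 0 b = C (signWeight α b) := by
  simp [startPoly, patternWeight, numChanges]

lemma startPoly_succ (N : ℕ) (b : Bool) :
    startPoly α (N + 1) b =
      C (signWeight α b) * (startPoly α N b + X * startPoly α N (!b)) := by
  have hfirst : ∀ c, ∑ s : Fin N → Bool,
      C (patternWeight α (Fin.cons b (Fin.cons c s : Fin (N + 1) → Bool))) *
        X ^ numChanges (Fin.cons b (Fin.cons c s : Fin (N + 1) → Bool)) =
      C (signWeight α b) * (if b = c then 1 else X) * startPoly α N c := fun c ↦ by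
    simp only [startPoly, mul_sum]
    refine sum_congr rfl fun s _ ↦ ?_
    rw [patternWeight_cons, numChanges_cons, Fin.cons_zero, pow_add, C_mul]
    split_ifs <;> ring
  rw [startPoly, sum_pi_fin_succ, Fintype.sum_bool, hfirst, hfirst]
  cases b <;>
    simp only [Bool.false_eq_true, Bool.true_eq_false, ↓reduceIte, mul_one, Bool.not_false,
      Bool.not_true] <;>
    ring

lemma changePoly_zero : changePoly α 0 = 1 := by
  simp [changePoly_eq_startPoly, startPoly_zero, signWeight]

lemma changePoly_one : changePoly α 1 = 1 + 2 * C (α * (1 - α)) * (X - 1) := by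
  simp only [changePoly_eq_startPoly, startPoly_succ, startPoly_zero, signWeight, ↓reduceIte,
    Bool.not_true, Bool.not_false, Bool.false_eq_true, map_sub, map_one, map_mul, X_mul_C]
  ring

lemma changePoly_add_two (N : ℕ) :
    changePoly α (N + 2) =
      changePoly α (N + 1) + C (α * (1 - α)) * (X ^ 2 - 1) * changePoly α N := by
  simp only [changePoly_eq_startPoly, startPoly_succ, Bool.not_true, Bool.not_false, signWeight,
    if_true, Bool.false_eq_true, if_false, C_mul, C_sub, C_1]
  ring

theorem changePoly_eq_jacobsthal (N : ℕ) :
    changePoly α N = jacobsthal (C (α * (1 - α)) * (X ^ 2 - 1)) (N + 1) +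
      2 * C (α * (1 - α)) * (X - 1) * jacobsthal (C (α * (1 - α)) * (X ^ 2 - 1)) N := by
  induction N using Nat.twoStepInduction with
  | zero => simp [changePoly_zero]
  | one => simp [changePoly_one, jacobsthal_add_two]
  | more N h₀ h₁ =>
    rw [changePoly_add_two, h₀, h₁, jacobsthal_add_two _ (N + 1), jacobsthal_add_two _ N]
    ring

lemma coeff_X_mul_expand_two_mul (f : R[X]) (κ : ℕ) :
    (X * expand R 2 f).coeff (2 * κ) = 0 := by
  cases κ with
  | zero => simp
  | succ κ =>
    rw [show 2 * (κ + 1) = 2 * κ + 1 + 1 by ring, coeff_X_mul, coeff_expand two_pos,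
      if_neg (by omega)]

theorem coeff_changePoly_two_mul (n κ : ℕ) :
    (changePoly α n).coeff (2 * κ) =
      (jacobsthal (C (α * (1 - α)) * (X - 1)) (n + 1)).coeff κ -
        2 * (α * (1 - α)) * (jacobsthal (C (α * (1 - α)) * (X - 1)) n).coeff κ := by
  have hz : C (α * (1 - α)) * (X ^ 2 - 1) = expand R 2 (C (α * (1 - α)) * (X - 1)) := by simp
  rw [changePoly_eq_jacobsthal, hz, ← map_jacobsthal (expand R 2),
    ← map_jacobsthal (expand R 2)]
  have hodd : ∀ g : R[X], (2 * C (α * (1 - α)) * (X - 1) * expand R 2 g).coeff (2 * κ) =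
      -(2 * (α * (1 - α)) * g.coeff κ) := fun g ↦ by
    rw [show 2 * C (α * (1 - α)) * (X - 1) * expand R 2 g =
        C (2 * (α * (1 - α))) * (X * expand R 2 g) - C (2 * (α * (1 - α))) * expand R 2 g by
      simp only [map_mul, map_ofNat]; ring]
    rw [coeff_sub, coeff_C_mul, coeff_C_mul, coeff_X_mul_expand_two_mul,
      coeff_expand_mul' two_pos]
    ring
  rw [coeff_add, hodd, coeff_expand_mul' two_pos]
  ring

lemma coeff_jacobsthal (t : R) (n κ : ℕ) :
    (jacobsthal (C t * (X - 1)) n).coeff κ =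
      ∑ m ∈ range n, m.choose (n - 1 - m) * t ^ (n - 1 - m) *
        ((-1) ^ (n - 1 - m - κ) * (n - 1 - m).choose κ) := by
  rw [jacobsthal_eq_sum_range, finsetSum_coeff]
  refine sum_congr rfl fun m _ ↦ ?_
  rw [mul_pow, ← C_pow, ← mul_assoc, ← C_eq_natCast, ← C_mul, coeff_C_mul, sub_eq_add_neg,
    ← C_1, ← C_neg, coeff_X_add_C_pow]

end SignPattern

lemma trinom_eq_choose_mul_choose {m i j l : ℕ} (h : i + j + l = m) :
    trinom m i j l = m.choose (i + j) * (i + j).choose i := by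
  subst h
  have hm := Nat.add_choose_mul_factorial_mul_factorial (i + j) l
  have hij := Nat.add_choose_mul_factorial_mul_factorial i j
  rw [← Nat.choose_symm_add] at hm hij
  rw [trinom, if_pos (by omega)]
  simp only [Int.toNat_natCast]
  rw [← hm, ← hij]
  push_cast
  field_simp

lemma trinom_eq_zero_of_neg {m : ℕ} {i j l : ℤ} (h : j < 0 ∨ l < 0) : trinom m i j l = 0 :=
  if_neg (by omega)

lemma choose_mul_choose_succ_mul_sub (m j κ : ℕ) :
    (j + 1 - κ) * m.choose (j + 1) * (j + 1).choose κ = (m - j) * m.choose j * j.choose κ := by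
  have h₁ := Nat.choose_mul_succ_eq j κ
  have h₂ := Nat.choose_succ_right_eq m j
  calc (j + 1 - κ) * m.choose (j + 1) * (j + 1).choose κ
      = m.choose (j + 1) * (j.choose κ * (j + 1)) := by rw [h₁]; ring
    _ = (m - j) * m.choose j * j.choose κ := by
        rw [mul_comm (j.choose κ), ← mul_assoc, h₂]; ring

lemma neg_one_pow_sub_mul_choose (j κ : ℕ) :
    (-1 : ℝ) ^ (j - κ) * j.choose κ = -((-1) ^ (j + 1 - κ) * j.choose κ) := by
  rcases le_or_gt κ j with h | h
  · rw [Nat.sub_add_comm h, pow_succ]; ring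
  · simp [Nat.choose_eq_zero_of_lt h]

lemma trinom_summand_eq_choose {n m κ : ℕ} (hm : m < n) (hn : n ≠ 2 * m + 1) (t : ℝ) :
    ((n : ℝ) - 2 * κ + 1) / (2 * (m : ℝ) - n + 1) *
        trinom m κ ((n : ℤ) - κ - m) (2 * (m : ℤ) - n) * (-1 : ℝ) ^ ((n : ℤ) - κ - m) *
          t ^ (n - m) =
      m.choose (n - m) * t ^ (n - m) * ((-1) ^ (n - m - κ) * (n - m).choose κ) -
        2 * t * (m.choose (n - 1 - m) * t ^ (n - 1 - m) *
          ((-1) ^ (n - 1 - m - κ) * (n - 1 - m).choose κ)) := by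
  obtain ⟨j, rfl⟩ : ∃ j, n = m + j + 1 := ⟨n - m - 1, by omega⟩
  rw [show m + j + 1 - m = j + 1 by omega, show m + j + 1 - 1 - m = j by omega,
    neg_one_pow_sub_mul_choose j κ, pow_succ]
  rcases lt_or_gt_of_ne (show m ≠ j by omega) with hmj | hjm
  · rw [trinom_eq_zero_of_neg (Or.inr (by push_cast; omega)),
      Nat.choose_eq_zero_of_lt hmj, Nat.choose_eq_zero_of_lt (by omega : m < j + 1)]
    simp
  rcases le_or_gt κ (j + 1) with hκ | hκ
  · have hsum : κ + (j + 1 - κ) + (m - j - 1) = m := by omega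
    rw [show ((m + j + 1 : ℕ) : ℤ) - κ - m = ((j + 1 - κ : ℕ) : ℤ) by
        push_cast [hκ]; ring,
      show 2 * (m : ℤ) - (m + j + 1 : ℕ) = ((m - j - 1 : ℕ) : ℤ) by push_cast [hjm]; omega,
      trinom_eq_choose_mul_choose hsum, show κ + (j + 1 - κ) = j + 1 by omega, zpow_natCast]
    have key := congrArg (Nat.cast : ℕ → ℝ) (choose_mul_choose_succ_mul_sub m j κ)
    push_cast [hκ, hjm.le] at key
    have hden : 2 * (m : ℝ) - (m + j + 1 : ℕ) + 1 = m - j := by push_cast; ring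
    rw [hden, div_mul_eq_mul_div, div_mul_eq_mul_div, div_mul_eq_mul_div,
      div_eq_iff (sub_ne_zero.2 (by exact_mod_cast hjm.ne'))]
    push_cast
    linear_combination (2 * (-1 : ℝ) ^ (j + 1 - κ) * t ^ j * t) * key
  · rw [trinom_eq_zero_of_neg (Or.inl (by push_cast; omega)),
      Nat.choose_eq_zero_of_lt hκ, Nat.choose_eq_zero_of_lt (by omega : j < κ)]
    simp

lemma sum_trinom_eq_sum_choose {n : ℕ} (hn : Even n) (κ : ℕ) (t : ℝ) :
    ∑ m ∈ Icc (n / 2) n, ((n : ℝ) - 2 * κ + 1) / (2 * (m : ℝ) - n + 1) *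
        trinom m κ ((n : ℤ) - κ - m) (2 * (m : ℤ) - n) * (-1 : ℝ) ^ ((n : ℤ) - κ - m) *
          t ^ (n - m) =
      ∑ m ∈ range (n + 1),
          m.choose (n - m) * t ^ (n - m) * ((-1) ^ (n - m - κ) * (n - m).choose κ) -
        2 * t * ∑ m ∈ range n, m.choose (n - 1 - m) * t ^ (n - 1 - m) *
          ((-1) ^ (n - 1 - m - κ) * (n - 1 - m).choose κ) := by
  have hsub : Icc (n / 2) n ⊆ range (n + 1) := fun m hm ↦ by simp at hm ⊢; omega
  rw [sum_subset hsub fun m hm hm' ↦ ?_, sum_range_succ, sum_range_succ, mul_sum,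
    add_sub_right_comm, ← sum_sub_distrib]
  · congr 1
    · refine sum_congr rfl fun m hm ↦ trinom_summand_eq_choose (mem_range.1 hm) ?_ t
      obtain ⟨c, rfl⟩ := hn
      omega
    · rcases Nat.eq_zero_or_pos κ with rfl | hκ
      · have h₁ : trinom n 0 0 n = 1 := by
          simpa using trinom_eq_choose_mul_choose (m := n) (i := 0) (j := 0) (l := n) (by omega)
        have h₂ : ((n : ℝ) + 1) / (2 * n - n + 1) = 1 := by
          rw [show 2 * (n : ℝ) - n + 1 = n + 1 by ring, div_self (by positivity)]
        simp [show 2 * (n : ℤ) - n = n by ring, h₁, h₂]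
      · rw [trinom_eq_zero_of_neg (Or.inl (by omega))]
        simp [Nat.choose_eq_zero_of_lt hκ]
  · rw [trinom_eq_zero_of_neg (Or.inr (by simp at hm hm'; omega))]
    simp

section Probability

variable {Ω : Type*} {n : ℕ} {a : ℕ → Ω → ℝ}

noncomputable def signPattern (a : ℕ → Ω → ℝ) (n : ℕ) (ω : Ω) : Fin (n + 1) → Bool :=
  fun i ↦ 0 < a i ω

lemma mul_neg_iff_of_ne_zero {x y : ℝ} (hx : x ≠ 0) (hy : y ≠ 0) :
    x * y < 0 ↔ ¬(0 < x ↔ 0 < y) := by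
  rcases hx.lt_or_gt with hx | hx <;> rcases hy.lt_or_gt with hy | hy <;>
    simp [mul_neg_iff, hx, hy, hx.not_gt, hy.not_gt]

lemma signChanges_eq_numChanges {ω : Ω} (h : ∀ i ≤ n, a i ω ≠ 0) :
    signChanges a n ω = numChanges (signPattern a n ω) := by
  rw [signChanges, numChanges, card_filter, card_filter, ← Fin.sum_univ_eq_sum_range]
  refine sum_congr rfl fun i _ ↦ if_congr ?_ rfl rfl
  rw [mul_neg_iff_of_ne_zero (h i (by omega)) (h (i + 1) (by omega))]
  simp [signPattern]

lemma measurableSet_sign (b : Bool) : MeasurableSet {x : ℝ | decide (0 < x) = b} := by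
  cases b
  · simpa using measurableSet_le measurable_id measurable_const
  · simpa using measurableSet_lt measurable_const measurable_id

lemma signWeight_nonneg {α : ℝ} (hα : α ∈ Set.Icc (0 : ℝ) 1) (b : Bool) :
    0 ≤ signWeight α b := by
  cases b <;> simp [signWeight, hα.1, hα.2]

lemma patternWeight_nonneg {α : ℝ} (hα : α ∈ Set.Icc (0 : ℝ) 1) {N : ℕ}
    (s : Fin (N + 1) → Bool) : 0 ≤ patternWeight α s :=
  prod_nonneg fun i _ ↦ signWeight_nonneg hα (s i)

variable [MeasurableSpace Ω] {μ : Measure Ω} [IsProbabilityMeasure μ] {α : ℝ}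

lemma measurable_signPattern (hmeas : ∀ i, Measurable (a i)) : Measurable (signPattern a n) :=
  measurable_pi_lambda _ fun i ↦ measurable_to_bool <| by
    simpa [signPattern, Set.preimage] using
      (measurableSet_lt measurable_const (hmeas i) : MeasurableSet {ω | 0 < a i ω})

lemma ae_forall_ne_zero (hmeas : ∀ i, Measurable (a i)) (hα : α ∈ Set.Icc (0 : ℝ) 1)
    (hpos : ∀ i ≤ n, μ {ω | 0 < a i ω} = ENNReal.ofReal α)
    (hneg : ∀ i ≤ n, μ {ω | a i ω < 0} = ENNReal.ofReal (1 - α)) :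
    ∀ᵐ ω ∂μ, ∀ i ≤ n, a i ω ≠ 0 := by
  refine ae_all_iff.2 fun i ↦ ?_
  by_cases hi : i ≤ n
  · have hP : MeasurableSet {ω | 0 < a i ω} := measurableSet_lt measurable_const (hmeas i)
    have hN : MeasurableSet {ω | a i ω < 0} := measurableSet_lt (hmeas i) measurable_const
    have hdisj : Disjoint {ω | 0 < a i ω} {ω | a i ω < 0} :=
      Set.disjoint_left.2 fun ω (h₁ : 0 < a i ω) (h₂ : a i ω < 0) ↦ lt_asymm h₁ h₂
    have hunion : μ ({ω | 0 < a i ω} ∪ {ω | a i ω < 0}) = 1 := by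
      rw [measure_union hdisj hN, hpos i hi, hneg i hi,
        ← ENNReal.ofReal_add hα.1 (by linarith [hα.2])]
      simp
    rw [← prob_compl_eq_zero_iff (hP.union hN)] at hunion
    refine measure_mono_null (fun ω hω ↦ ?_) hunion
    simp_all
  · exact .of_forall fun ω h ↦ absurd h hi

lemma measure_preimage_sign (hmeas : ∀ i, Measurable (a i)) (hα : α ∈ Set.Icc (0 : ℝ) 1)
    (hpos : ∀ i ≤ n, μ {ω | 0 < a i ω} = ENNReal.ofReal α) {i : ℕ} (hi : i ≤ n)
    (b : Bool) :
    μ (a i ⁻¹' {x | decide (0 < x) = b}) = ENNReal.ofReal (signWeight α b) := by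
  cases b
  · have hcompl : a i ⁻¹' {x | decide (0 < x) = false} = {ω | 0 < a i ω}ᶜ := by ext; simp
    rw [hcompl, prob_compl_eq_one_sub (measurableSet_lt measurable_const (hmeas i)), hpos i hi,
      ← ENNReal.ofReal_one, ← ENNReal.ofReal_sub _ hα.1]
    rfl
  · simpa [signWeight] using hpos i hi

lemma measure_signPattern_preimage (hmeas : ∀ i, Measurable (a i))
    (hα : α ∈ Set.Icc (0 : ℝ) 1)
    (hindep : iIndepFun (fun i : Fin (n + 1) ↦ a i) μ)
    (hpos : ∀ i ≤ n, μ {ω | 0 < a i ω} = ENNReal.ofReal α) (s : Fin (n + 1) → Bool) :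
    μ (signPattern a n ⁻¹' {s}) = ENNReal.ofReal (patternWeight α s) := by
  have hset : signPattern a n ⁻¹' {s} =
      ⋂ i ∈ (univ : Finset (Fin (n + 1))), a i ⁻¹' {x | decide (0 < x) = s i} := by
    ext ω; simp [signPattern, funext_iff]
  have hprod := hindep.measure_inter_preimage_eq_mul univ
    (sets := fun i ↦ {x | decide (0 < x) = s i}) fun i _ ↦ measurableSet_sign (s i)
  beta_reduce at hprod
  rw [hset, hprod, patternWeight,
    ENNReal.ofReal_prod_of_nonneg fun i _ ↦ signWeight_nonneg hα (s i)]
  exact prod_congr rfl fun i _ ↦ measure_preimage_sign hmeas hα hpos (Fin.is_le i) (s i)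

theorem toReal_measure_signChanges_eq_coeff (hmeas : ∀ i, Measurable (a i))
    (hα : α ∈ Set.Icc (0 : ℝ) 1) (hindep : iIndepFun (fun i : Fin (n + 1) ↦ a i) μ)
    (hpos : ∀ i ≤ n, μ {ω | 0 < a i ω} = ENNReal.ofReal α)
    (hneg : ∀ i ≤ n, μ {ω | a i ω < 0} = ENNReal.ofReal (1 - α)) (k : ℕ) :
    (μ {ω | signChanges a n ω = k}).toReal = (changePoly α n).coeff k := by
  have hae : {ω | signChanges a n ω = k} =ᵐ[μ]
      signPattern a n ⁻¹' ↑({s | numChanges s = k} : Finset (Fin (n + 1) → Bool)) := by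
    filter_upwards [ae_forall_ne_zero hmeas hα hpos hneg] with ω hω
    show (signChanges a n ω = k) = (signPattern a n ω ∈ _)
    simp [signChanges_eq_numChanges hω]
  rw [measure_congr hae, ← sum_measure_preimage_singleton, ENNReal.toReal_sum, changePoly,
    finsetSum_coeff, sum_filter]
  · refine sum_congr rfl fun s _ ↦ ?_
    rw [measure_signPattern_preimage hmeas hα hindep hpos, coeff_C_mul_X_pow,
      ENNReal.toReal_ofReal (patternWeight_nonneg hα s)]
    exact if_congr eq_comm rfl rfl
  · exact fun s _ ↦ measure_ne_top μ _
  · exact fun s _ ↦ measurable_signPattern hmeas (measurableSet_singleton s)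

end Probability

theorem prob_signChanges_even_explicit_general
    {Ω : Type*} [MeasurableSpace Ω] (μ : Measure Ω) [IsProbabilityMeasure μ]
    (n : ℕ) (hneven : Even n)
    (α : ℝ) (hα : α ∈ Set.Icc (0 : ℝ) 1)
    (k k' : ℕ) (heven : k = 2 * k')
    (a : ℕ → Ω → ℝ)
    (hmeas : ∀ i, Measurable (a i))
    (hindep : iIndepFun
      (fun i : Fin (n + 1) => a i) μ)
    (hpos : ∀ i ≤ n, μ {ω | 0 < a i ω} = ENNReal.ofReal α)
    (hneg : ∀ i ≤ n, μ {ω | a i ω < 0} = ENNReal.ofReal (1 - α)) :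
    (μ {ω | signChanges a n ω = k}).toReal =
      ∑ m ∈ Finset.Icc (n / 2) n,
        ((n : ℝ) - k + 1) / (2 * (m : ℝ) - n + 1) *
          trinom m (k' : ℤ) ((n : ℤ) - k' - m) (2 * (m : ℤ) - n) *
          (-1 : ℝ) ^ ((n : ℤ) - k' - m) * (α * (1 - α)) ^ (n - m) := by
  subst heven
  rw [toReal_measure_signChanges_eq_coeff hmeas hα hindep hpos hneg, coeff_changePoly_two_mul,
    coeff_jacobsthal, coeff_jacobsthal, Nat.cast_mul, Nat.cast_ofNat,
    sum_trinom_eq_sum_choose hneven]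
  simp only [Nat.add_sub_cancel]

/-- Explicit formula for the probability `p_{k,n}` of exactly `k` sign changes,
for even `n ≥ 2`, even `k = 2k′` and `α ≠ 1/2`:
`p_{k,n} = Σ_{m=n/2}^{n} ((n−k+1)/(2m−n+1))·M(m; k′, n−k′−m, 2m−n)·(−1)^{n−k′−m}·(α(1−α))^{n−m}`. -/
theorem prob_signChanges_even_explicit
    {Ω : Type*} [MeasurableSpace Ω] (μ : Measure Ω) [IsProbabilityMeasure μ]
    (n : ℕ) (hn : 2 ≤ n) (hneven : Even n)
    (α : ℝ) (hα : α ∈ Set.Icc (0 : ℝ) 1) (hα' : α ≠ 1 / 2)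
    (k k' : ℕ) (hkn : k ≤ n) (heven : k = 2 * k')
    (a : ℕ → Ω → ℝ)
    (hmeas : ∀ i, Measurable (a i))
    (hindep : iIndepFun
      (fun i : Fin (n + 1) => a i) μ)
    (hpos : ∀ i ≤ n, μ {ω | 0 < a i ω} = ENNReal.ofReal α)
    (hneg : ∀ i ≤ n, μ {ω | a i ω < 0} = ENNReal.ofReal (1 - α)) :
    (μ {ω | signChanges a n ω = k}).toReal =
      ∑ m ∈ Finset.Icc (n / 2) n,
        ((n : ℝ) - k + 1) / (2 * (m : ℝ) - n + 1) *
          trinom m (k' : ℤ) ((n : ℤ) - k' - m) (2 * (m : ℤ) - n) *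
          (-1 : ℝ) ^ ((n : ℤ) - k' - m) * (α * (1 - α)) ^ (n - m) :=
  prob_signChanges_even_explicit_general μ n hneven α hα k k' heven a hmeas hindep hpos hneg
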